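/- In the quantum shuffle algebra (F, ⋆) with parameters q_{ij}, for any i ≠ j and integers m, l ≥ 0: w_i^{⋆m} ⋆ w_j ⋆ w_i^{⋆l} = ∑_{k=0}^m ∑_{t=0}^l q_{ij}^k q_{ji}^{l-t} q_{ii}^{k(l-t)} binom(m,k)_{q_{ii}} binom(l,t)_{q_{ii}} (m-k+l-t)_{q_{ii}}! (k+t)_{q_{ii}}! · w_i^{m-k+l-t} w_j w_i^{k+t}, where products without ⋆ denote concatenation. -/

import Mathlib

/-- The free associative algebra `F` on generators `w_i` (`i ∈ I`), realized as
the monoid algebra of the free monoid on `I` (words = lists). -/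
abbrev FA (K I : Type*) [Field K] : Type _ := MonoidAlgebra K (FreeMonoid I)

variable {K I : Type*} [Field K] [Fintype I] [DecidableEq I]

/-- The generator `w_i` of the free algebra. -/
noncomputable def wgen (K : Type*) [Field K] {I : Type*} (i : I) : FA K I :=
  MonoidAlgebra.single (FreeMonoid.of i) 1

/-- `q_{α_i, ν}` where `ν` is the degree of the word `w` (here `w` is a list of
letters, and the degree records the number of occurrences of each letter). -/
noncomputable def qrow (qm : I → I → K) (i : I) (w : List I) : K :=
  ∏ k : I, qm i k ^ (w.count k)

/-- Auxiliary recursion for the quantum shuffle product of two basis words;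
the arguments are the *reversed* words. It implements
`(x w_i) ⋆ (y w_j) = (x w_i ⋆ y) w_j + q_{α_i, ν+α_j} (x ⋆ y w_j) w_i`. -/
noncomputable def shAux (qm : I → I → K) : List I → List I → FA K I
  | [], b => MonoidAlgebra.single (FreeMonoid.ofList b.reverse) 1
  | a, [] => MonoidAlgebra.single (FreeMonoid.ofList a.reverse) 1
  | i :: a', j :: b' =>
      shAux qm (i :: a') b' * MonoidAlgebra.single (FreeMonoid.of j) 1
        + (qrow qm i b' * qm i j) •
            (shAux qm a' (j :: b') * MonoidAlgebra.single (FreeMonoid.of i) 1)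
  termination_by a b => a.length + b.length

/-- The quantum shuffle product `⋆` on the free algebra, extended bilinearly
from basis words. -/
noncomputable def shuffle (qm : I → I → K) (x y : FA K I) : FA K I :=
  Finsupp.sum x.coeff fun a ca =>
    Finsupp.sum y.coeff fun b cb =>
      (ca * cb) • shAux qm (FreeMonoid.toList a).reverse (FreeMonoid.toList b).reverse

/-- The `m`-fold quantum shuffle power `w_i^{⋆m}`. -/
noncomputable def starPow (qm : I → I → K) (i : I) : ℕ → FA K I
  | 0 => 1
  | n + 1 => shuffle qm (starPow qm i n) (wgen K i)

/-- The `t`-integer `(n)_t = 1 + t + ⋯ + t^{n-1}`. -/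
noncomputable def qint (t : K) (n : ℕ) : K := ∑ i ∈ Finset.range n, t ^ i

/-- The `t`-factorial `(m)_t! = ∏_{k=1}^m (k)_t`. -/
noncomputable def qfact (t : K) (m : ℕ) : K := ∏ k ∈ Finset.range m, qint t (k + 1)

/-- The Gaussian binomial coefficient `binom(n,k)_t`, via the Pascal recursion
`binom(n,k)_t = t^k binom(n-1,k)_t + binom(n-1,k-1)_t`; it agrees with
`(n)_t!/((k)_t!(n-k)_t!)` whenever the latter is defined. -/
noncomputable def qbinom (t : K) : ℕ → ℕ → K
  | _, 0 => 1
  | 0, _ + 1 => 0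
  | n + 1, k + 1 => t ^ (k + 1) * qbinom t n (k + 1) + qbinom t n k

/-! Shuffling one more letter `w_i` into `w_i^n` multiplies by `(n+1)_{q_ii}`, so
`w_i^{⋆n} = (n)_{q_ii}! · w_i^n` and everything reduces to shuffles of words. Shuffling `w_j` into
`w_i^m` moves it past `k` letters at cost `q_ij^k`. Shuffling `w_i^l` into `w_i^a w_j w_i^b`
sends `l - t` of its letters past `w_j` (cost `q_ji^{l-t} q_ii^{b(l-t)}`), and the recursion on
last letters is the q-Pascal rule, producing `binom(b+t,t) binom(a+l-t,l-t)`. The identity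
`binom(a+b,b) (a)! (b)! = (a+b)!` then turns the coefficients into those of the formula. -/

lemma qbinom_zero_right (t : K) (n : ℕ) : qbinom t n 0 = 1 := by cases n <;> rfl

lemma qbinom_succ_succ (t : K) (n k : ℕ) :
    qbinom t (n + 1) (k + 1) = t ^ (k + 1) * qbinom t n (k + 1) + qbinom t n k := rfl

lemma qbinom_eq_zero_of_lt (t : K) {n k : ℕ} (h : n < k) : qbinom t n k = 0 := by
  induction n generalizing k with
  | zero => obtain ⟨k, rfl⟩ := Nat.exists_eq_add_one.mpr h; rfl
  | succ n ih =>
    obtain ⟨k, rfl⟩ := Nat.exists_eq_add_one.mpr (Nat.zero_lt_of_lt h)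
    rw [qbinom_succ_succ, ih (by omega), ih (by omega), mul_zero, add_zero]

lemma qbinom_self (t : K) (n : ℕ) : qbinom t n n = 1 := by
  induction n with
  | zero => rfl
  | succ n ih =>
    rw [qbinom_succ_succ, ih, qbinom_eq_zero_of_lt t n.lt_succ_self, mul_zero, zero_add]

lemma qint_add (t : K) (a b : ℕ) : qint t (a + b) = qint t a + t ^ a * qint t b := by
  simp only [qint, Finset.sum_range_add, Finset.mul_sum, pow_add]

lemma qbinom_one_right (t : K) (n : ℕ) : qbinom t n 1 = qint t n := by
  induction n with
  | zero => rfl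
  | succ n ih =>
    rw [qbinom_succ_succ, ih, qbinom_zero_right, add_comm n, qint_add]
    simp [qint, add_comm]

lemma qfact_zero (t : K) : qfact t 0 = 1 := Finset.prod_range_zero _

lemma qfact_succ (t : K) (n : ℕ) : qfact t (n + 1) = qfact t n * qint t (n + 1) :=
  Finset.prod_range_succ _ _

lemma qbinom_add_mul_qfact_mul_qfact (t : K) (a b : ℕ) :
    qbinom t (a + b) b * qfact t a * qfact t b = qfact t (a + b) := by
  induction a generalizing b with
  | zero => rw [zero_add, qbinom_self, qfact_zero, one_mul, one_mul]
  | succ a iha =>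
    induction b with
    | zero => rw [add_zero, qbinom_zero_right, qfact_zero, one_mul, mul_one]
    | succ b ihb =>
      have hint : qint t (a + (b + 1) + 1) = qint t (b + 1) + t ^ (b + 1) * qint t (a + 1) := by
        rw [show a + (b + 1) + 1 = b + 1 + (a + 1) by omega, qint_add]
      have iha' := iha (b + 1)
      rw [qfact_succ t b] at iha'
      rw [show a + 1 + b = a + (b + 1) by omega, qfact_succ t a] at ihb
      rw [show a + 1 + (b + 1) = a + (b + 1) + 1 by omega, qbinom_succ_succ, qfact_succ t a,
        qfact_succ t b, qfact_succ t (a + (b + 1)), hint]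
      linear_combination (t ^ (b + 1) * qint t (a + 1)) * iha' + qint t (b + 1) * ihb

section Linearity

variable (qm : I → I → K)

lemma shuffle_single_single (a b : FreeMonoid I) (c d : K) :
    shuffle qm (MonoidAlgebra.single a c) (MonoidAlgebra.single b d)
      = (c * d) • shAux qm a.toList.reverse b.toList.reverse := by
  unfold shuffle
  rw [MonoidAlgebra.coeff_single, MonoidAlgebra.coeff_single, Finsupp.sum_single_index,
    Finsupp.sum_single_index] <;> simp

lemma shuffle_zero_left (y : FA K I) : shuffle qm 0 y = 0 :=
  Finsupp.sum_zero_index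

lemma shuffle_add_left (x x' y : FA K I) :
    shuffle qm (x + x') y = shuffle qm x y + shuffle qm x' y := by
  refine Finsupp.sum_add_index' (by simp) fun a c c' => ?_
  simp only [add_mul, add_smul, Finsupp.sum_add]

lemma shuffle_sum_left {ι : Type*} (s : Finset ι) (f : ι → FA K I) (y : FA K I) :
    shuffle qm (∑ n ∈ s, f n) y = ∑ n ∈ s, shuffle qm (f n) y := by
  classical
  induction s using Finset.induction_on with
  | empty => simp [shuffle_zero_left]
  | insert a s h ih => rw [Finset.sum_insert h, Finset.sum_insert h, shuffle_add_left, ih]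

lemma shuffle_smul_left (c : K) (x y : FA K I) :
    shuffle qm (c • x) y = c • shuffle qm x y := by
  unfold shuffle
  rw [MonoidAlgebra.coeff_smul, Finsupp.sum_smul_index (by simp), Finsupp.smul_sum]
  refine Finsupp.sum_congr fun a _ => ?_
  simp only [Finsupp.smul_sum, mul_assoc, mul_smul]

lemma shuffle_smul_right (c : K) (x y : FA K I) :
    shuffle qm x (c • y) = c • shuffle qm x y := by
  unfold shuffle
  rw [Finsupp.smul_sum]
  refine Finsupp.sum_congr fun a _ => ?_
  rw [MonoidAlgebra.coeff_smul, Finsupp.sum_smul_index (by simp), Finsupp.smul_sum]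
  simp only [mul_left_comm _ c, mul_smul]

end Linearity

noncomputable def word (K : Type*) [Field K] {I : Type*} (u : List I) : FA K I :=
  MonoidAlgebra.single (FreeMonoid.ofList u) 1

omit [Fintype I] [DecidableEq I] in
lemma word_mul_word (u v : List I) : word K u * word K v = word K (u ++ v) := by
  rw [word, word, MonoidAlgebra.single_mul_single, one_mul]
  rfl

omit [Fintype I] [DecidableEq I] in
lemma wgen_eq_word (i : I) : wgen K i = word K [i] := rfl

omit [Fintype I] [DecidableEq I] in
lemma word_cons_replicate_mul (u : List I) (i j : I) (n : ℕ) :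
    word K (u ++ j :: List.replicate n i) * word K [i]
      = word K (u ++ j :: List.replicate (n + 1) i) := by
  rw [word_mul_word, List.replicate_succ']
  simp

lemma qrow_reverse (qm : I → I → K) (i : I) (w : List I) : qrow qm i w.reverse = qrow qm i w := by
  simp only [qrow, List.count_reverse]

lemma qrow_replicate (qm : I → I → K) (i j : I) (n : ℕ) :
    qrow qm i (List.replicate n j) = qm i j ^ n := by
  rw [qrow, Fintype.prod_eq_single j fun k hk => by simp [List.count_replicate, Ne.symm hk]]
  simp

section Words

variable (qm : I → I → K)

lemma shuffle_word_word (u v : List I) :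
    shuffle qm (word K u) (word K v) = shAux qm u.reverse v.reverse := by
  rw [word, word, shuffle_single_single, one_mul, one_smul]
  rfl

lemma shuffle_nil_word (v : List I) : shuffle qm (word K []) (word K v) = word K v := by
  rw [shuffle_word_word, List.reverse_nil, shAux, List.reverse_reverse, word]

lemma shuffle_word_nil (u : List I) : shuffle qm (word K u) (word K []) = word K u := by
  rw [shuffle_word_word, List.reverse_nil]
  rcases h : u.reverse with _ | ⟨a, w⟩
  · rw [List.reverse_eq_nil_iff.mp h, shAux]
    rfl
  · rw [shAux, ← h, List.reverse_reverse]
    · rfl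
    · simp

lemma shuffle_concat_concat (u v : List I) (a b : I) :
    shuffle qm (word K (u ++ [a])) (word K (v ++ [b]))
      = shuffle qm (word K (u ++ [a])) (word K v) * word K [b]
        + (qrow qm a v * qm a b) • (shuffle qm (word K u) (word K (v ++ [b])) * word K [a]) := by
  simp only [shuffle_word_word, List.reverse_concat]
  rw [shAux, qrow_reverse]
  rfl

variable (i j : I)

lemma shuffle_replicate_replicate (a l : ℕ) :
    shuffle qm (word K (List.replicate a i)) (word K (List.replicate l i))
      = qbinom (qm i i) (a + l) l • word K (List.replicate (a + l) i) := by
  induction a generalizing l with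
  | zero => rw [List.replicate_zero, shuffle_nil_word, zero_add, qbinom_self, one_smul]
  | succ a iha =>
    induction l with
    | zero => rw [List.replicate_zero, shuffle_word_nil, add_zero, qbinom_zero_right, one_smul]
    | succ l ihl =>
      rw [List.replicate_succ' (n := a), List.replicate_succ' (n := l), shuffle_concat_concat,
        ← List.replicate_succ', ← List.replicate_succ', ihl, iha, qrow_replicate, smul_mul_assoc,
        smul_mul_assoc, word_mul_word, word_mul_word, ← List.replicate_succ',
        ← List.replicate_succ', smul_smul, ← pow_succ]
      rw [show a + (l + 1) = a + 1 + l by omega, show a + 1 + (l + 1) = a + 1 + l + 1 by omega,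
        qbinom_succ_succ, add_smul, add_comm]

lemma shuffle_replicate_singleton (m : ℕ) :
    shuffle qm (word K (List.replicate m i)) (word K [j])
      = ∑ k ∈ Finset.range (m + 1),
          qm i j ^ k • word K (List.replicate (m - k) i ++ j :: List.replicate k i) := by
  induction m with
  | zero => simp [shuffle_nil_word]
  | succ m ih =>
    have key := shuffle_concat_concat qm (List.replicate m i) [] i j
    simp only [List.nil_append, ← List.replicate_succ'] at key
    rw [key, shuffle_word_nil, ih, word_mul_word, Finset.sum_mul, Finset.smul_sum,
      Finset.sum_range_succ' _ (m + 1)]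
    simp only [smul_mul_assoc, word_cons_replicate_mul, qrow, List.count_nil, pow_zero,
      Finset.prod_const_one, one_mul, smul_smul, ← pow_succ', Nat.add_sub_add_right, one_smul,
      Nat.sub_zero, List.replicate_zero]
    rw [add_comm]

lemma shuffle_concat_replicate (a l : ℕ) :
    shuffle qm (word K (List.replicate a i ++ [j])) (word K (List.replicate l i))
      = ∑ t ∈ Finset.range (l + 1), (qm j i ^ (l - t) * qbinom (qm i i) (a + (l - t)) (l - t)) •
          word K (List.replicate (a + (l - t)) i ++ j :: List.replicate t i) := by
  induction l with
  | zero => simp [shuffle_word_nil, qbinom_zero_right]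
  | succ l ih =>
    rw [List.replicate_succ' (n := l), shuffle_concat_concat, ← List.replicate_succ', ih,
      shuffle_replicate_replicate, qrow_replicate, Finset.sum_mul, Finset.sum_range_succ' _ (l + 1)]
    simp only [smul_mul_assoc, word_cons_replicate_mul, smul_smul, ← pow_succ,
      Nat.add_sub_add_right, Nat.sub_zero, List.replicate_zero]
    rw [word_mul_word, add_comm]

lemma shuffle_replicate_cons_replicate (a b l : ℕ) :
    shuffle qm (word K (List.replicate a i ++ j :: List.replicate b i))
        (word K (List.replicate l i))
      = ∑ t ∈ Finset.range (l + 1),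
          (qm j i ^ (l - t) * qm i i ^ (b * (l - t)) * qbinom (qm i i) (b + t) t *
              qbinom (qm i i) (a + (l - t)) (l - t)) •
            word K (List.replicate (a + (l - t)) i ++ j :: List.replicate (b + t) i) := by
  induction b generalizing l with
  | zero => simp [shuffle_concat_replicate, qbinom_self]
  | succ b ihb =>
    induction l with
    | zero => simp [shuffle_word_nil, qbinom_zero_right]
    | succ l ihl =>
      have hw : List.replicate a i ++ j :: List.replicate (b + 1) i
          = (List.replicate a i ++ j :: List.replicate b i) ++ [i] := by
        simp [List.replicate_succ']
      rw [hw, List.replicate_succ' (n := l), shuffle_concat_concat, ← hw, ← List.replicate_succ',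
        ihl, ihb, qrow_replicate, Finset.sum_mul, Finset.sum_mul, Finset.smul_sum,
        Finset.sum_range_succ' _ (l + 1), Finset.sum_range_succ' _ (l + 1)]
      simp only [smul_mul_assoc, word_cons_replicate_mul, smul_smul, Nat.add_sub_add_right]
      rw [← add_assoc, ← Finset.sum_add_distrib]
      congr 1
      · refine Finset.sum_congr rfl fun t ht => ?_
        obtain ⟨s, rfl⟩ := Nat.exists_eq_add_of_le (Finset.mem_range_succ_iff.mp ht)
        rw [show b + (t + 1) + 1 = b + 1 + t + 1 by omega,
          show b + 1 + (t + 1) = b + 1 + t + 1 by omega, ← add_smul, qbinom_succ_succ,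
          show b + (t + 1) = b + 1 + t by omega, Nat.add_sub_cancel_left]
        congr 1
        ring
      · simp only [Nat.sub_zero, add_zero, qbinom_zero_right, mul_one]
        congr 1
        ring

end Words

lemma starPow_eq_qfact_smul_word (qm : I → I → K) (i : I) (n : ℕ) :
    starPow qm i n = qfact (qm i i) n • word K (List.replicate n i) := by
  induction n with
  | zero => rw [starPow, qfact_zero, one_smul]; rfl
  | succ n ih =>
    rw [starPow, ih, shuffle_smul_left, wgen_eq_word, ← List.replicate_one,
      shuffle_replicate_replicate, qbinom_one_right, smul_smul, ← qfact_succ]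

lemma qfact_mul_qfact_mul_qbinom_mul_qbinom (t : K) {m l k s : ℕ} (hk : k ≤ m) (hs : s ≤ l) :
    qfact t m * qfact t l * (qbinom t (k + s) s * qbinom t (m - k + (l - s)) (l - s))
      = qbinom t m k * qbinom t l s * qfact t (m - k + (l - s)) * qfact t (k + s) := by
  obtain ⟨a, rfl⟩ := Nat.exists_eq_add_of_le' hk
  obtain ⟨c, rfl⟩ := Nat.exists_eq_add_of_le' hs
  rw [Nat.add_sub_cancel, Nat.add_sub_cancel, ← qbinom_add_mul_qfact_mul_qfact t a k,
    ← qbinom_add_mul_qfact_mul_qfact t c s, ← qbinom_add_mul_qfact_mul_qfact t a c,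
    ← qbinom_add_mul_qfact_mul_qfact t k s]
  ring

theorem shuffle_power_formula_general (qm : I → I → K) (i j : I)
    (m l : ℕ) :
    shuffle qm (shuffle qm (starPow qm i m) (wgen K j)) (starPow qm i l)
      = ∑ k ∈ Finset.range (m + 1), ∑ t ∈ Finset.range (l + 1),
          (qm i j ^ k * qm j i ^ (l - t) * qm i i ^ (k * (l - t)) *
              qbinom (qm i i) m k * qbinom (qm i i) l t *
              qfact (qm i i) (m - k + (l - t)) * qfact (qm i i) (k + t)) •
            MonoidAlgebra.single
              (FreeMonoid.ofList
                (List.replicate (m - k + (l - t)) i ++ j :: List.replicate (k + t) i)) 1 := by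
  rw [starPow_eq_qfact_smul_word, starPow_eq_qfact_smul_word, shuffle_smul_left, wgen_eq_word,
    shuffle_replicate_singleton, shuffle_smul_left, shuffle_smul_right, shuffle_sum_left,
    Finset.smul_sum, Finset.smul_sum]
  refine Finset.sum_congr rfl fun k hk => ?_
  rw [shuffle_smul_left, shuffle_replicate_cons_replicate, Finset.smul_sum, Finset.smul_sum,
    Finset.smul_sum]
  refine Finset.sum_congr rfl fun t ht => ?_
  rw [smul_smul, smul_smul, smul_smul, word]
  congr 1
  linear_combination (qm i j ^ k * qm j i ^ (l - t) * qm i i ^ (k * (l - t))) *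
    qfact_mul_qfact_mul_qbinom_mul_qbinom (qm i i) (Finset.mem_range_succ_iff.mp hk)
      (Finset.mem_range_succ_iff.mp ht)

/-- in the quantum shuffle algebra, for `i ≠ j` and `m, l ≥ 0`,
`w_i^{⋆m} ⋆ w_j ⋆ w_i^{⋆l} = ∑_{k=0}^m ∑_{t=0}^l q_{ij}^k q_{ji}^{l-t} q_{ii}^{k(l-t)}
binom(m,k)_{q_{ii}} binom(l,t)_{q_{ii}} (m-k+l-t)_{q_{ii}}! (k+t)_{q_{ii}}! ·
w_i^{m-k+l-t} w_j w_i^{k+t}` (products without `⋆` are concatenations). -/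
theorem shuffle_power_formula (qm : I → I → K) (i j : I) (hij : i ≠ j)
    (m l : ℕ) :
    shuffle qm (shuffle qm (starPow qm i m) (wgen K j)) (starPow qm i l)
      = ∑ k ∈ Finset.range (m + 1), ∑ t ∈ Finset.range (l + 1),
          (qm i j ^ k * qm j i ^ (l - t) * qm i i ^ (k * (l - t)) *
              qbinom (qm i i) m k * qbinom (qm i i) l t *
              qfact (qm i i) (m - k + (l - t)) * qfact (qm i i) (k + t)) •
            MonoidAlgebra.single
              (FreeMonoid.ofList
                (List.replicate (m - k + (l - t)) i ++ j :: List.replicate (k + t) i)) 1 :=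
  shuffle_power_formula_general qm i j m l
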